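/- arXiv:math/0610221 — 4 statements merged into one kernel-verified Lean document; each statement's English description precedes it below -/
import Mathlib

section
/- Let R : H₁ → H₂ be a compact operator with singular values μ_k, uniformly bounded by some M, associated to a complete orthonormal system (u_k) of H₁, and let α > 0. Then the operator Λ_α = Σ_k (α/(μ_k² + α)) (u_k ⊗ u_k) is invertible with inverse Λ_α^{-1} = (1/α) Σ_k (μ_k² + α)(u_k ⊗ u_k), and the operator norm of Λ_α^{-1} equals 1 + (sup_k μ_k²)/α. -/
open scoped RealInnerProductSpace ENNReal

namespace LambdaAuxProof

private lemma pt_bound {c : ℕ → ℝ} {C : ℝ} (hc : ∀ k, |c k| ≤ C)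
    (f : lp (fun _ : ℕ => ℝ) 2) (k : ℕ) :
    ‖c k * f k‖ ^ (2 : ℝ≥0∞).toReal ≤ C ^ (2 : ℝ≥0∞).toReal * ‖f k‖ ^ (2 : ℝ≥0∞).toReal := by
  have hC : 0 ≤ C := le_trans (abs_nonneg _) (hc 0)
  have ht : (0:ℝ) ≤ (2 : ℝ≥0∞).toReal := by norm_num
  calc ‖c k * f k‖ ^ (2 : ℝ≥0∞).toReal
      ≤ (C * ‖f k‖) ^ (2 : ℝ≥0∞).toReal := by
        apply Real.rpow_le_rpow (norm_nonneg _) _ ht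
        rw [norm_mul]
        exact mul_le_mul_of_nonneg_right (hc k) (norm_nonneg _)
    _ = C ^ (2 : ℝ≥0∞).toReal * ‖f k‖ ^ (2 : ℝ≥0∞).toReal :=
        Real.mul_rpow hC (norm_nonneg _)

lemma memℓp_mul {c : ℕ → ℝ} {C : ℝ} (hc : ∀ k, |c k| ≤ C) (f : lp (fun _ : ℕ => ℝ) 2) :
    Memℓp (fun k => c k * f k) 2 := by
  have hC : 0 ≤ C := le_trans (abs_nonneg _) (hc 0)
  apply memℓp_gen
  have ht : (0:ℝ) < (2 : ℝ≥0∞).toReal := by norm_num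
  have hf : Summable fun k => ‖f k‖ ^ (2 : ℝ≥0∞).toReal := (lp.memℓp f).summable ht
  exact Summable.of_nonneg_of_le (fun k => Real.rpow_nonneg (norm_nonneg _) _)
    (fun k => pt_bound hc f k) (hf.mul_left (C ^ (2 : ℝ≥0∞).toReal))

noncomputable def diagLp {c : ℕ → ℝ} {C : ℝ} (hc : ∀ k, |c k| ≤ C) :
    lp (fun _ : ℕ => ℝ) 2 →L[ℝ] lp (fun _ : ℕ => ℝ) 2 :=
  LinearMap.mkContinuous
    { toFun := fun f => ⟨fun k => c k * f k, memℓp_mul hc f⟩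
      map_add' := by
        intro f g; apply lp.ext; funext k
        simp only [lp.coeFn_add, Pi.add_apply]
        exact mul_add _ _ _
      map_smul' := by
        intro r f; apply lp.ext; funext k
        simp only [lp.coeFn_smul, Pi.smul_apply, smul_eq_mul, RingHom.id_apply]
        ring }
    C
    (by
      intro f
      have hC : 0 ≤ C := le_trans (abs_nonneg _) (hc 0)
      have ht : (0:ℝ) < (2 : ℝ≥0∞).toReal := by norm_num
      apply lp.norm_le_of_tsum_le ht (mul_nonneg hC (norm_nonneg _))
      have hf : Summable fun k => ‖f k‖ ^ (2 : ℝ≥0∞).toReal := (lp.memℓp f).summable ht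
      calc ∑' k, ‖c k * f k‖ ^ (2 : ℝ≥0∞).toReal
          ≤ ∑' k, C ^ (2 : ℝ≥0∞).toReal * ‖f k‖ ^ (2 : ℝ≥0∞).toReal :=
            Summable.tsum_le_tsum (fun k => pt_bound hc f k)
              ((memℓp_mul hc f).summable ht) (hf.mul_left _)
        _ = (C * ‖f‖) ^ (2 : ℝ≥0∞).toReal := by
            rw [tsum_mul_left, ← lp.norm_rpow_eq_tsum ht, Real.mul_rpow hC (norm_nonneg _)])

@[simp] lemma diagLp_apply {c : ℕ → ℝ} {C : ℝ} (hc : ∀ k, |c k| ≤ C)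
    (f : lp (fun _ : ℕ => ℝ) 2) (k : ℕ) : (diagLp hc f : ∀ _ : ℕ, ℝ) k = c k * f k := rfl

lemma norm_diagLp_le {c : ℕ → ℝ} {C : ℝ} (hc : ∀ k, |c k| ≤ C) (f : lp (fun _ : ℕ => ℝ) 2) :
    ‖diagLp hc f‖ ≤ C * ‖f‖ := by
  have hC : 0 ≤ C := le_trans (abs_nonneg _) (hc 0)
  calc ‖diagLp hc f‖ ≤ ‖diagLp hc‖ * ‖f‖ := (diagLp hc).le_opNorm f
    _ ≤ C * ‖f‖ := mul_le_mul_of_nonneg_right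
        (LinearMap.mkContinuous_norm_le _ hC _) (norm_nonneg f)

variable {H : Type*} [NormedAddCommGroup H] [InnerProductSpace ℝ H] [CompleteSpace H]

noncomputable def diagOp (b : HilbertBasis ℕ ℝ H) {c : ℕ → ℝ} {C : ℝ} (hc : ∀ k, |c k| ≤ C) :
    H →L[ℝ] H :=
  (b.repr.symm.toContinuousLinearEquiv.toContinuousLinearMap).comp
    ((diagLp hc).comp b.repr.toContinuousLinearEquiv.toContinuousLinearMap)

lemma diagOp_apply (b : HilbertBasis ℕ ℝ H) {c : ℕ → ℝ} {C : ℝ} (hc : ∀ k, |c k| ≤ C) (x : H) :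
    diagOp b hc x = b.repr.symm (diagLp hc (b.repr x)) := rfl

lemma diagOp_hasSum (b : HilbertBasis ℕ ℝ H) {c : ℕ → ℝ} {C : ℝ} (hc : ∀ k, |c k| ≤ C) (x : H) :
    HasSum (fun k => (c k * ⟪b k, x⟫) • b k) (diagOp b hc x) := by
  have h := b.hasSum_repr_symm (diagLp hc (b.repr x))
  rw [← diagOp_apply b hc x] at h
  convert h using 2 with k
  rw [diagLp_apply, b.repr_apply_apply]

lemma diagOp_tsum (b : HilbertBasis ℕ ℝ H) {c : ℕ → ℝ} {C : ℝ} (hc : ∀ k, |c k| ≤ C) (x : H) :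
    diagOp b hc x = ∑' k, (c k * ⟪b k, x⟫) • b k :=
  (diagOp_hasSum b hc x).tsum_eq.symm

lemma diagOp_comp_eq_one (b : HilbertBasis ℕ ℝ H) {c c' : ℕ → ℝ} {C C' : ℝ}
    (hc : ∀ k, |c k| ≤ C) (hc' : ∀ k, |c' k| ≤ C') (h : ∀ k, c k * c' k = 1) :
    (diagOp b hc).comp (diagOp b hc') = 1 := by
  ext x
  rw [ContinuousLinearMap.comp_apply, diagOp_apply, diagOp_apply,
    LinearIsometryEquiv.apply_symm_apply]
  have : diagLp hc (diagLp hc' (b.repr x)) = b.repr x := by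
    apply lp.ext; funext k
    rw [diagLp_apply, diagLp_apply, ← mul_assoc, h k, one_mul]
  rw [this, LinearIsometryEquiv.symm_apply_apply, ContinuousLinearMap.one_apply]

lemma diagOp_norm_le (b : HilbertBasis ℕ ℝ H) {c : ℕ → ℝ} {C : ℝ} (hc : ∀ k, |c k| ≤ C)
    (x : H) : ‖diagOp b hc x‖ ≤ C * ‖x‖ := by
  rw [diagOp_apply, LinearIsometryEquiv.norm_map]
  calc ‖diagLp hc (b.repr x)‖ ≤ C * ‖b.repr x‖ := norm_diagLp_le hc _
    _ = C * ‖x‖ := by rw [LinearIsometryEquiv.norm_map]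

lemma diagOp_apply_basis (b : HilbertBasis ℕ ℝ H) {c : ℕ → ℝ} {C : ℝ} (hc : ∀ k, |c k| ≤ C)
    (k : ℕ) : diagOp b hc (b k) = c k • b k := by
  have h := diagOp_hasSum b hc (b k)
  have horto := b.orthonormal
  have hite : (fun i => (c i * ⟪b i, b k⟫) • b i) = fun i => if i = k then c k • b k else 0 := by
    funext i
    rcases eq_or_ne i k with rfl | hik
    · simp [orthonormal_iff_ite.mp horto i i, horto.1 i]
    · simp [orthonormal_iff_ite.mp horto i k, hik]
  rw [hite] at h
  exact h.unique (hasSum_ite_eq k _)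

end LambdaAuxProof

open LambdaAuxProof

/-- With singular values `μ_k` bounded by `M` (tending to `0` by compactness),
associated to a complete orthonormal system `(u_k)` of `H₁`, and `α > 0`, the operator
`Λ_α = Σ_k (α/(μ_k² + α)) (u_k ⊗ u_k)` is invertible with inverse
`Λ_α⁻¹ = (1/α) Σ_k (μ_k² + α)(u_k ⊗ u_k)` (in the strong sense), and
`‖Λ_α⁻¹‖ = 1 + (sup_k μ_k²)/α`. -/
theorem lambda_alpha_inverse_norm
    {H₁ : Type*} [NormedAddCommGroup H₁] [InnerProductSpace ℝ H₁] [CompleteSpace H₁]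
    (μ : ℕ → ℝ) (hμ : ∀ k, 0 ≤ μ k) (M : ℝ) (hM : ∀ k, μ k ≤ M)
    (hμ0 : Filter.Tendsto μ Filter.atTop (nhds 0))
    (u : ℕ → H₁) (hu : Orthonormal ℝ u)
    (hucomplete : (Submodule.span ℝ (Set.range u)).topologicalClosure = ⊤)
    (α : ℝ) (hα : 0 < α)
    (Λ : H₁ →L[ℝ] H₁)
    (hΛ : ∀ x : H₁, Λ x = ∑' k, ((α / (μ k ^ 2 + α)) * ⟪u k, x⟫) • u k) :
    ∃ Λinv : H₁ →L[ℝ] H₁,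
      Λ.comp Λinv = 1 ∧ Λinv.comp Λ = 1 ∧
      (∀ x : H₁, Λinv x = ∑' k, ((1 / α) * (μ k ^ 2 + α) * ⟪u k, x⟫) • u k) ∧
      ‖Λinv‖ = 1 + (⨆ k, μ k ^ 2) / α := by
  -- setup
  have hsp : ⊤ ≤ (Submodule.span ℝ (Set.range u)).topologicalClosure := hucomplete.ge
  set b : HilbertBasis ℕ ℝ H₁ := HilbertBasis.mk hu hsp with hbdef
  have hb : ⇑b = u := HilbertBasis.coe_mk hu hsp
  set S : ℝ := ⨆ k, μ k ^ 2 with hS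
  have hden : ∀ k, (0:ℝ) < μ k ^ 2 + α := fun k => by positivity
  have hSbdd : BddAbove (Set.range fun k => μ k ^ 2) := by
    refine ⟨M ^ 2, ?_⟩
    rintro - ⟨k, rfl⟩
    exact pow_le_pow_left₀ (hμ k) (hM k) 2
  have hSle : ∀ k, μ k ^ 2 ≤ S := fun k => le_ciSup hSbdd k
  have hS0 : 0 ≤ S := le_trans (sq_nonneg (μ 0)) (hSle 0)
  -- coefficient sequences
  set c : ℕ → ℝ := fun k => (1 / α) * (μ k ^ 2 + α) with hcdef
  set a : ℕ → ℝ := fun k => α / (μ k ^ 2 + α) with hadef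
  have hcpos : ∀ k, 0 < c k := fun k => mul_pos (by positivity) (hden k)
  have hc : ∀ k, |c k| ≤ 1 + S / α := by
    intro k
    rw [abs_of_pos (hcpos k)]
    have heq : c k = μ k ^ 2 / α + 1 := by simp only [hcdef]; field_simp
    have h1 : μ k ^ 2 / α ≤ S / α := by gcongr; exact hSle k
    rw [heq]; linarith
  have ha : ∀ k, |a k| ≤ 1 := by
    intro k
    rw [abs_of_pos (div_pos hα (hden k))]
    rw [div_le_one (hden k)]
    nlinarith [sq_nonneg (μ k)]
  have hac : ∀ k, a k * c k = 1 := by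
    intro k
    simp only [hadef, hcdef]; field_simp
  have hca : ∀ k, c k * a k = 1 := fun k => by rw [mul_comm]; exact hac k
  -- the inverse operator
  have hΛeq : Λ = diagOp b ha := by
    ext x
    rw [hΛ x, diagOp_tsum b ha x]
    simp only [hadef, ← hb]
  refine ⟨diagOp b hc, ?_, ?_, ?_, ?_⟩
  · rw [hΛeq]; exact diagOp_comp_eq_one b ha hc hac
  · rw [hΛeq]; exact diagOp_comp_eq_one b hc ha hca
  · intro x
    rw [diagOp_tsum b hc x]
    simp only [hcdef, ← hb]
  · set N : ℝ := ‖diagOp b hc‖ with hN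
    apply le_antisymm
    · refine ContinuousLinearMap.opNorm_le_bound _ ?_ (diagOp_norm_le b hc)
      have := div_nonneg hS0 hα.le
      linarith
    · have hk : ∀ k, c k ≤ N := by
        intro k
        have h1 : diagOp b hc (b k) = c k • b k := diagOp_apply_basis b hc k
        have h2 := (diagOp b hc).le_opNorm (b k)
        rw [h1, norm_smul, b.orthonormal.1 k] at h2
        simpa [Real.norm_eq_abs, abs_of_pos (hcpos k)] using h2
      have hμk : ∀ k, μ k ^ 2 ≤ α * N - α := by
        intro k
        have h3 := mul_le_mul_of_nonneg_left (hk k) hα.le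
        have h4 : α * c k = μ k ^ 2 + α := by simp only [hcdef]; field_simp
        linarith [h4 ▸ h3]
      have hSN : S ≤ α * N - α := ciSup_le hμk
      have h5 : S / α ≤ N - 1 := by rw [div_le_iff₀ hα]; linarith
      linarith
end

section
/- With the notation of the previous setup (S = Γ^{1/2} Λ_α Γ^{1/2}, Λ_α = I − R*(RR* + αI)^{-1}R, R compact with singular values μ_k bounded by M), for all β > 0 the operator norm of Γ^{1/2}(S + βI)^{-1}Γ^{1/2} is at most ‖Λ_α^{-1}‖ ≤ (M² + α)/α, i.e., it is O(1/α) uniformly in β. -/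
open scoped RealInnerProductSpace

set_option maxHeartbeats 1000000

/-- With `Γ = G∘G` compact self-adjoint positive injective, `R = D∘G` with
`‖R‖ ≤ M` (singular values bounded by `M`), `α, β > 0`, and
`S = Γ − ΓD*(Γ'' + αI)⁻¹DΓ` (`Γ'' = R R*`), the operator norm of
`Γ^{1/2}(S + βI)⁻¹Γ^{1/2}` is at most `(M² + α)/α`, i.e. `O(1/α)` uniformly in `β`. -/
theorem norm_sqrt_resolvent_sqrt_le
    {W V : Type*} [NormedAddCommGroup W] [InnerProductSpace ℝ W] [CompleteSpace W]
    [NormedAddCommGroup V] [InnerProductSpace ℝ V] [CompleteSpace V]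
    (D : W →L[ℝ] V)
    (G : W →L[ℝ] W) (hGsa : IsSelfAdjoint G) (hGpos : ∀ x : W, 0 ≤ ⟪G x, x⟫)
    (hGinj : Function.Injective G) (hGG_cpt : IsCompactOperator (G.comp G))
    (M α β : ℝ) (hα : 0 < α) (hβ : 0 < β)
    (hRM : ‖D.comp G‖ ≤ M)
    (Bα : V →L[ℝ] V)
    (hBα1 : ((D.comp G).comp (ContinuousLinearMap.adjoint (D.comp G))
      + α • (1 : V →L[ℝ] V)).comp Bα = 1)
    (hBα2 : Bα.comp ((D.comp G).comp (ContinuousLinearMap.adjoint (D.comp G))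
      + α • (1 : V →L[ℝ] V)) = 1)
    (S : W →L[ℝ] W)
    (hS : S = G.comp G
      - ((G.comp G).comp (ContinuousLinearMap.adjoint D)).comp
          (Bα.comp (D.comp (G.comp G))))
    (Bβ : W →L[ℝ] W)
    (hBβ1 : (S + β • (1 : W →L[ℝ] W)).comp Bβ = 1)
    (hBβ2 : Bβ.comp (S + β • (1 : W →L[ℝ] W)) = 1) :
    ‖G.comp (Bβ.comp G)‖ ≤ (M ^ 2 + α) / α := by
  classical
  have hGadj : ContinuousLinearMap.adjoint G = G := by
    rw [← ContinuousLinearMap.star_eq_adjoint]; exact hGsa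
  have hGsym : ∀ a b : W, ⟪G a, b⟫ = ⟪a, G b⟫ := by
    intro a b
    have h := ContinuousLinearMap.adjoint_inner_left G b a
    rwa [hGadj] at h
  set R := D.comp G with hR
  set Rs := ContinuousLinearMap.adjoint R with hRs
  have hRsnorm : ‖Rs‖ ≤ M := by
    rw [hRs]
    calc ‖ContinuousLinearMap.adjoint R‖ = ‖R‖ := (ContinuousLinearMap.adjoint : (W →L[ℝ] V) ≃ₗᵢ⋆[ℝ] _).norm_map R
    _ ≤ M := hRM
  have hM0 : 0 ≤ M := le_trans (norm_nonneg R) hRM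
  have hBαpt : ∀ v : V, R (Rs (Bα v)) + α • (Bα v) = v := by
    intro v
    have h := ContinuousLinearMap.ext_iff.mp hBα1 v
    simpa [ContinuousLinearMap.comp_apply, ContinuousLinearMap.add_apply,
      ContinuousLinearMap.smul_apply] using h
  set L : W →L[ℝ] W := 1 - Rs.comp (Bα.comp R) with hLdef
  have hLpt : ∀ z : W, L z = z - Rs (Bα (R z)) := by
    intro z; simp [hLdef]
  have hALpt : ∀ z : W, Rs (R (L z)) + α • (L z) = α • z := by
    intro z
    have key : R (Rs (Bα (R z))) + α • (Bα (R z)) = R z := hBαpt (R z)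
    rw [hLpt]
    have e1 : Rs (R (z - Rs (Bα (R z)))) + α • (z - Rs (Bα (R z)))
        = Rs (R z) - Rs (R (Rs (Bα (R z))) + α • (Bα (R z))) + α • z := by
      simp [map_sub, map_add, map_smul, smul_sub]
      abel
    rw [e1, key]
    abel
  have hSpt : ∀ x : W, S x = G (L (G x)) := by
    intro x
    simp [hS, hLdef, hRs, hR, ContinuousLinearMap.adjoint_comp, hGadj,
      map_sub]
  apply ContinuousLinearMap.opNorm_le_bound _ (by positivity)
  intro y
  set x := Bβ (G y) with hx
  have hmain : S x + β • x = G y := by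
    have h := ContinuousLinearMap.ext_iff.mp hBβ1 (G y)
    simpa [ContinuousLinearMap.comp_apply, ContinuousLinearMap.add_apply,
      ContinuousLinearMap.smul_apply] using h
  set z := G x with hz
  set w := L z with hw
  have hAw : Rs (R w) + α • w = α • z := hALpt z
  -- inner product identity
  have hinner : ⟪w, z⟫ + β * ‖x‖ ^ 2 = ⟪y, z⟫ := by
    have h1 : ⟪S x + β • x, x⟫ = ⟪G y, x⟫ := by rw [hmain]
    have h2 : ⟪S x, x⟫ = ⟪w, z⟫ := by
      rw [hSpt x]; exact hGsym (L (G x)) x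
    have h3 : ⟪G y, x⟫ = ⟪y, z⟫ := hGsym y x
    rw [inner_add_left, h2, h3] at h1
    rw [← h1, real_inner_smul_left, real_inner_self_eq_norm_sq]
  have hwz : α * ⟪w, z⟫ = ‖R w‖ ^ 2 + α * ‖w‖ ^ 2 := by
    have : ⟪w, α • z⟫ = ⟪w, Rs (R w) + α • w⟫ := by rw [hAw]
    rw [real_inner_smul_right, inner_add_right, real_inner_smul_right,
      real_inner_self_eq_norm_sq] at this
    rw [this, hRs, ContinuousLinearMap.adjoint_inner_right,
      real_inner_self_eq_norm_sq]
  have hAznorm : α * ‖z‖ ≤ M * ‖R w‖ + α * ‖w‖ := by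
    have h1 : α • z = Rs (R w) + α • w := hAw.symm
    calc α * ‖z‖ = ‖α • z‖ := by rw [norm_smul, Real.norm_eq_abs, abs_of_pos hα]
    _ = ‖Rs (R w) + α • w‖ := by rw [h1]
    _ ≤ ‖Rs (R w)‖ + ‖α • w‖ := norm_add_le _ _
    _ ≤ M * ‖R w‖ + α * ‖w‖ := by
        refine add_le_add ?_ (le_of_eq ?_)
        · calc ‖Rs (R w)‖ ≤ ‖Rs‖ * ‖R w‖ := Rs.le_opNorm _
          _ ≤ M * ‖R w‖ := mul_le_mul_of_nonneg_right hRsnorm (norm_nonneg _)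
        · rw [norm_smul, Real.norm_eq_abs, abs_of_pos hα]
  -- main chain
  have hgoal_z : (G.comp (Bβ.comp G)) y = z := by
    simp [hz, hx, ContinuousLinearMap.comp_apply]
  rw [hgoal_z]
  have hyz : ⟪y, z⟫ ≤ ‖y‖ * ‖z‖ := real_inner_le_norm y z
  have h1 : ‖R w‖ ^ 2 + α * ‖w‖ ^ 2 ≤ α * (‖y‖ * ‖z‖) := by
    have hx2 : 0 ≤ β * ‖x‖ ^ 2 := by positivity
    nlinarith [hinner, hyz, hwz]
  have h3 : (α * ‖z‖) ^ 2 ≤ (M ^ 2 + α) * (‖R w‖ ^ 2 + α * ‖w‖ ^ 2) := by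
    nlinarith [sq_nonneg (‖R w‖ - M * ‖w‖), norm_nonneg w, norm_nonneg (R w),
      norm_nonneg z, hα.le, hM0, hAznorm, mul_nonneg hα.le (norm_nonneg z)]
  have h4 : (α * ‖z‖) ^ 2 ≤ (M ^ 2 + α) * (α * (‖y‖ * ‖z‖)) := by
    refine le_trans h3 ?_
    have : (0:ℝ) ≤ M ^ 2 + α := by positivity
    nlinarith [h1]
  rcases eq_or_lt_of_le (norm_nonneg z) with hz0 | hz0
  · rw [← hz0]
    positivity
  · rw [div_mul_eq_mul_div, le_div_iff₀ hα]
    have hpos : 0 < α * ‖z‖ := mul_pos hα hz0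
    have h5 : (α * ‖z‖) * (α * ‖z‖) ≤ ((M ^ 2 + α) * ‖y‖) * (α * ‖z‖) := by
      calc (α * ‖z‖) * (α * ‖z‖) = (α * ‖z‖) ^ 2 := by ring
      _ ≤ (M ^ 2 + α) * (α * (‖y‖ * ‖z‖)) := h4
      _ = ((M ^ 2 + α) * ‖y‖) * (α * ‖z‖) := by ring
    have h6 : α * ‖z‖ ≤ (M ^ 2 + α) * ‖y‖ := le_of_mul_le_mul_right h5 hpos
    linarith
end

section
/- Under the assumptions that Ker Γ = Ker Γ'' = {0}, the couple (φ, ψ) ∈ W × L is uniquely determined by the pair of normal equations δ = Γφ + Γ'ψ and δ' = Γ'*φ + Γ''ψ if and only if (φ, ψ) ∉ N = {(φ,ψ) : φ + D*ψ = 0}; more precisely, two couples (φ,ψ) and (φ_a,ψ_a) satisfy the same normal equations if and only if their difference lies in N. -/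
open scoped RealInnerProductSpace

/-- Identifiability via the normal equations: with `Ker Γ = Ker Γ'' = {0}`
(`Γ' = ΓD*`, `Γ'* = DΓ`, `Γ'' = DΓD*`), two couples `(φ, ψ)` and `(φa, ψa)` satisfy
the same normal equations `δ = Γφ + Γ'ψ`, `δ' = Γ'*φ + Γ''ψ` if and only if their
difference lies in `N = {(φ, ψ) : φ + D*ψ = 0}`. -/
theorem same_normal_equations_iff_diff_in_N
    {W V : Type*} [NormedAddCommGroup W] [InnerProductSpace ℝ W] [CompleteSpace W]
    [NormedAddCommGroup V] [InnerProductSpace ℝ V] [CompleteSpace V]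
    (D : W →L[ℝ] V)
    (Γ : W →L[ℝ] W) (hΓsa : IsSelfAdjoint Γ) (hΓpos : ∀ x : W, 0 ≤ ⟪Γ x, x⟫)
    (hΓinj : Function.Injective Γ) (hΓcpt : IsCompactOperator Γ)
    (hΓ''inj : Function.Injective (D.comp (Γ.comp (ContinuousLinearMap.adjoint D))))
    (φ φa : W) (ψ ψa : V) :
    (Γ φ + (Γ.comp (ContinuousLinearMap.adjoint D)) ψ
        = Γ φa + (Γ.comp (ContinuousLinearMap.adjoint D)) ψa ∧
      (D.comp Γ) φ + (D.comp (Γ.comp (ContinuousLinearMap.adjoint D))) ψ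
        = (D.comp Γ) φa + (D.comp (Γ.comp (ContinuousLinearMap.adjoint D))) ψa)
      ↔ (φ - φa) + (ContinuousLinearMap.adjoint D) (ψ - ψa) = 0 := by
  constructor
  · rintro ⟨h1, -⟩
    have : Γ (φ + (ContinuousLinearMap.adjoint D) ψ)
        = Γ (φa + (ContinuousLinearMap.adjoint D) ψa) := by
      simpa [map_add] using h1
    have h2 := hΓinj this
    have : φ + (ContinuousLinearMap.adjoint D) ψ
        = φa + (ContinuousLinearMap.adjoint D) ψa := h2
    rw [map_sub]
    abel_nf
    linear_combination (norm := abel) this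
  · intro h
    have h2 : φ + (ContinuousLinearMap.adjoint D) ψ
        = φa + (ContinuousLinearMap.adjoint D) ψa := by
      have := h
      rw [map_sub] at this
      linear_combination (norm := abel) this
    constructor
    · simpa [map_add] using congrArg Γ h2
    · simpa [map_add] using congrArg (D.comp Γ) h2
end

section
/- Let X be a random element of a separable Hilbert space H with ‖X‖ ≤ M almost surely, and let X₁,...,Xₙ be i.i.d. copies of X. Define Γ = E(X ⊗ X) and Γ_n = (1/n) Σ_k X_k ⊗ X_k as Hilbert–Schmidt operators. Then E ‖Γ_n − Γ‖²_{HS} ≤ C/n for a constant C depending only on M. -/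
open MeasureTheory
open scoped ProbabilityTheory
open scoped RealInnerProductSpace

lemma my_ofReal_tsum_le {f : ℕ → ℝ} (hf : ∀ i, 0 ≤ f i) :
    ENNReal.ofReal (∑' i, f i) ≤ ∑' i, ENNReal.ofReal (f i) := by
  by_cases h : Summable f
  · rw [ENNReal.ofReal_tsum_of_nonneg hf h]
  · rw [tsum_eq_zero_of_not_summable h]; simp

lemma my_integrable_of_bound {Ω : Type*} [MeasureSpace Ω] [IsProbabilityMeasure (ℙ : Measure Ω)]
    {f : Ω → ℝ} (hf : AEStronglyMeasurable f (ℙ : Measure Ω)) (C : ℝ)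
    (h : ∀ᵐ ω ∂(ℙ : Measure Ω), |f ω| ≤ C) : Integrable f (ℙ : Measure Ω) :=
  memLp_one_iff_integrable.mp <|
    MemLp.of_bound hf C (h.mono fun ω hω => by simpa [Real.norm_eq_abs] using hω)

lemma my_scalar_var_bound {Ω : Type*} [MeasureSpace Ω] [IsProbabilityMeasure (ℙ : Measure Ω)]
    (V : ℕ → Ω → ℝ) (hm : ∀ k, Measurable (V k))
    (hid : ∀ k, ProbabilityTheory.IdentDistrib (V k) (V 0) ℙ ℙ)
    (hind : Pairwise fun k l => ProbabilityTheory.IndepFun (V k) (V l) ℙ)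
    (K : ℝ) (hK : ∀ k, ∀ᵐ ω ∂(ℙ : Measure Ω), |V k ω| ≤ K)
    (n : ℕ) (hn : 0 < n) :
    ∫ ω, ((n : ℝ)⁻¹ * ∑ k ∈ Finset.range n, (V k ω - ∫ ω', V 0 ω' ∂ℙ)) ^ 2 ∂ℙ
      ≤ (∫ ω, (V 0 ω) ^ 2 ∂ℙ) / n := by
  set μ : ℝ := ∫ ω', V 0 ω' ∂ℙ with hμ
  have hmem : ∀ k, MemLp (V k) 2 (ℙ : Measure Ω) := fun k =>
    MemLp.of_bound (hm k).aestronglyMeasurable K <| (hK k).mono fun ω h => by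
      simpa [Real.norm_eq_abs] using h
  have hint : ∀ k, Integrable (V k) (ℙ : Measure Ω) := fun k => (hmem k).integrable one_le_two
  have hEk : ∀ k, ∫ ω, V k ω ∂ℙ = μ := fun k => (hid k).integral_eq
  set S : Ω → ℝ := ∑ k ∈ Finset.range n, V k with hS
  have hSmem : MemLp S 2 (ℙ : Measure Ω) := memLp_finset_sum' _ fun k _ => hmem k
  have hSapp : ∀ ω, S ω = ∑ k ∈ Finset.range n, V k ω := fun ω => by
    rw [hS]; simp
  have hES : ∫ ω, S ω ∂ℙ = n * μ := by
    simp_rw [hSapp]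
    rw [integral_finset_sum _ fun k _ => hint k]
    simp [hEk, Finset.sum_const]
  have hvar : ProbabilityTheory.variance S ℙ = ∑ k ∈ Finset.range n,
      ProbabilityTheory.variance (V k) ℙ := by
    exact ProbabilityTheory.IndepFun.variance_sum (fun k _ => hmem k)
      (fun k _ l _ hkl => hind hkl)
  have hvark : ∀ k, ProbabilityTheory.variance (V k) ℙ
      = ProbabilityTheory.variance (V 0) ℙ := fun k => (hid k).variance_eq
  have hvar0 : ProbabilityTheory.variance (V 0) ℙ ≤ ∫ ω, (V 0 ω) ^ 2 ∂ℙ := by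
    simpa using ProbabilityTheory.variance_le_expectation_sq (hm 0).aestronglyMeasurable
  have key : ∫ ω, (S ω - n * μ) ^ 2 ∂ℙ = ProbabilityTheory.variance S ℙ := by
    have := ProbabilityTheory.variance_eq_integral hSmem.1.aemeasurable
    rw [this, hES]
  have expand : ∀ ω, ((n : ℝ)⁻¹ * ∑ k ∈ Finset.range n, (V k ω - μ)) ^ 2
      = ((n : ℝ)⁻¹) ^ 2 * (S ω - n * μ) ^ 2 := by
    intro ω
    rw [Finset.sum_sub_distrib, Finset.sum_const, Finset.card_range, mul_pow, hSapp]
    ring_nf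
  calc ∫ ω, ((n : ℝ)⁻¹ * ∑ k ∈ Finset.range n, (V k ω - μ)) ^ 2 ∂ℙ
      = ((n : ℝ)⁻¹) ^ 2 * ∫ ω, (S ω - n * μ) ^ 2 ∂ℙ := by
        simp_rw [expand]; exact integral_const_mul _ _
    _ = ((n : ℝ)⁻¹) ^ 2 * ∑ k ∈ Finset.range n, ProbabilityTheory.variance (V k) ℙ := by
        rw [key, hvar]
    _ = ((n : ℝ)⁻¹) ^ 2 * (n * ProbabilityTheory.variance (V 0) ℙ) := by
        simp [hvark, Finset.sum_const]
    _ ≤ ((n : ℝ)⁻¹) ^ 2 * (n * ∫ ω, (V 0 ω) ^ 2 ∂ℙ) := by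
        apply mul_le_mul_of_nonneg_left _ (by positivity)
        exact mul_le_mul_of_nonneg_left hvar0 (by positivity)
    _ = (∫ ω, (V 0 ω) ^ 2 ∂ℙ) / n := by
        have hn' : (n : ℝ) ≠ 0 := Nat.cast_ne_zero.mpr hn.ne'
        field_simp

/-- If `X` is a bounded random element of a separable Hilbert space `H`
(`‖X‖ ≤ M` a.s.) and `X₁, ..., Xₙ` are i.i.d. copies, then the empirical covariance
operator `Γₙ = (1/n) Σ Xₖ ⊗ Xₖ` satisfies `E‖Γₙ − Γ‖²_HS ≤ C/n` where
`Γ = E(X ⊗ X)` and the Hilbert–Schmidt norm is computed in a Hilbert basis. -/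
theorem empirical_covariance_HS_rate
    {H : Type*} [NormedAddCommGroup H] [InnerProductSpace ℝ H] [CompleteSpace H]
    [MeasurableSpace H] [BorelSpace H]
    {Ω : Type*} [MeasureSpace Ω] [IsProbabilityMeasure (ℙ : Measure Ω)]
    (X : ℕ → Ω → H) (hmeas : ∀ k, Measurable (X k))
    (hindep : ProbabilityTheory.iIndepFun X (ℙ : Measure Ω))
    (hident : ∀ k, ProbabilityTheory.IdentDistrib (X k) (X 0) ℙ ℙ)
    (M : ℝ) (hM : ∀ᵐ ω ∂(ℙ : Measure Ω), ‖X 0 ω‖ ≤ M)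
    (b : HilbertBasis ℕ ℝ H) :
    ∃ C : ℝ, ∀ n : ℕ, 0 < n →
      ∫ ω, (∑' i, ‖(((n : ℝ)⁻¹ •
          ∑ k ∈ Finset.range n, (innerSL ℝ (X k ω)).smulRight (X k ω))
          - ∫ ω', (innerSL ℝ (X 0 ω')).smulRight (X 0 ω') ∂(ℙ : Measure Ω)) (b i)‖ ^ 2) ∂(ℙ : Measure Ω)
        ≤ C / n := by
  classical
  -- separability and second countability of `H`
  haveI : TopologicalSpace.SeparableSpace H := by
    rw [← TopologicalSpace.isSeparable_univ_iff]
    have h1 : TopologicalSpace.IsSeparable (Set.range b) := (Set.countable_range b).isSeparable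
    have h2 := (h1.span (R := ℝ)).closure
    have h3 : closure ((Submodule.span ℝ (Set.range b)) : Set H) = Set.univ := by
      rw [← Submodule.topologicalClosure_coe, b.dense_span]; rfl
    rwa [h3] at h2
  haveI : SecondCountableTopology H := UniformSpace.secondCountable_of_separable H
  -- `M` is nonnegative
  haveI : (ae (ℙ : Measure Ω)).NeBot := ae_neBot.mpr (IsProbabilityMeasure.ne_zero _)
  have hM0 : 0 ≤ M := by
    obtain ⟨ω0, hω0⟩ := hM.exists
    exact (norm_nonneg _).trans hω0
  -- almost sure bounds for all copies
  have hMk : ∀ k, ∀ᵐ ω ∂(ℙ : Measure Ω), ‖X k ω‖ ≤ M := by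
    intro k
    have hs : MeasurableSet {x : H | ¬ ‖x‖ ≤ M} := by
      simp only [not_le]
      exact (isOpen_lt continuous_const continuous_norm).measurableSet
    have h := (hident k).measure_mem_eq hs
    rw [ae_iff]
    rw [ae_iff] at hM
    exact h.trans hM
  -- Parseval (real form)
  have hv : ∀ v : H, HasSum (fun j => ⟪v, b j⟫ ^ 2) (‖v‖ ^ 2) := by
    intro v
    have h := b.hasSum_inner_mul_inner v v
    rw [real_inner_self_eq_norm_sq] at h
    have hf : (fun j => ⟪v, b j⟫ ^ 2) = fun i => ⟪v, b i⟫ * ⟪b i, v⟫ := by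
      funext j
      rw [sq, real_inner_comm (b j) v]
    rw [hf]; exact h
  -- integrability of the rank one operator
  have hcontψ : Continuous (fun x : H => (innerSL ℝ x).smulRight x) := by
    have h1 : Continuous fun x : H => (ContinuousLinearMap.smulRightL ℝ H H) (innerSL ℝ x) :=
      (ContinuousLinearMap.smulRightL ℝ H H).continuous.comp (innerSL ℝ).continuous
    exact h1.clm_apply continuous_id
  have hTsm : AEStronglyMeasurable (fun ω => (innerSL ℝ (X 0 ω)).smulRight (X 0 ω))
      (ℙ : Measure Ω) :=
    (hcontψ.comp_stronglyMeasurable (hmeas 0).stronglyMeasurable).aestronglyMeasurable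
  have hTint : Integrable (fun ω => (innerSL ℝ (X 0 ω)).smulRight (X 0 ω)) (ℙ : Measure Ω) := by
    refine memLp_one_iff_integrable.mp <| MemLp.of_bound hTsm (M ^ 2) <| hM.mono fun ω h => ?_
    rw [ContinuousLinearMap.norm_smulRight_apply, innerSL_apply_norm]
    calc ‖X 0 ω‖ * ‖X 0 ω‖ ≤ M * M := mul_le_mul h h (norm_nonneg _) hM0
      _ = M ^ 2 := (sq M).symm
  -- inner products of the mean operator
  have hΓij : ∀ i j : ℕ,
      ⟪(∫ ω', (innerSL ℝ (X 0 ω')).smulRight (X 0 ω') ∂(ℙ : Measure Ω)) (b i), b j⟫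
        = ∫ ω', ⟪X 0 ω', b i⟫ * ⟪X 0 ω', b j⟫ ∂(ℙ : Measure Ω) := by
    intro i j
    rw [ContinuousLinearMap.integral_apply hTint]
    rw [real_inner_comm]
    rw [← integral_inner (hTint.apply_continuousLinearMap (b i)) (b j)]
    congr 1
    funext ω'
    rw [real_inner_comm]
    simp [ContinuousLinearMap.smulRight_apply, real_inner_smul_left]
  -- measurability of the scalar coordinates
  have hVmeas : ∀ (i j k : ℕ),
      Measurable (fun ω => ⟪X k ω, b i⟫ * ⟪X k ω, b j⟫) := fun i j k =>
    ((hmeas k).inner_const).mul ((hmeas k).inner_const)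
  have hgmeas : ∀ i j : ℕ, Measurable (fun x : H => ⟪x, b i⟫ * ⟪x, b j⟫) := fun i j =>
    (measurable_id.inner_const).mul (measurable_id.inner_const)
  have hVbd : ∀ (i j k : ℕ), ∀ᵐ ω ∂(ℙ : Measure Ω),
      |⟪X k ω, b i⟫ * ⟪X k ω, b j⟫| ≤ M ^ 2 := by
    intro i j k
    refine (hMk k).mono fun ω h => ?_
    have hbi : ∀ l : ℕ, |⟪X k ω, b l⟫| ≤ M := by
      intro l
      calc |⟪X k ω, b l⟫| ≤ ‖X k ω‖ * ‖b l‖ := abs_real_inner_le_norm _ _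
        _ = ‖X k ω‖ := by rw [b.orthonormal.1 l, mul_one]
        _ ≤ M := h
    calc |⟪X k ω, b i⟫ * ⟪X k ω, b j⟫| = |⟪X k ω, b i⟫| * |⟪X k ω, b j⟫| := abs_mul _ _
      _ ≤ M * M := mul_le_mul (hbi i) (hbi j) (abs_nonneg _) hM0
      _ = M ^ 2 := (sq M).symm
  have hVid : ∀ (i j k : ℕ), ProbabilityTheory.IdentDistrib
      (fun ω => ⟪X k ω, b i⟫ * ⟪X k ω, b j⟫) (fun ω => ⟪X 0 ω, b i⟫ * ⟪X 0 ω, b j⟫) ℙ ℙ :=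
    fun i j k => (hident k).comp (hgmeas i j)
  have hVind : ∀ i j : ℕ, Pairwise fun k l => ProbabilityTheory.IndepFun
      (fun ω => ⟪X k ω, b i⟫ * ⟪X k ω, b j⟫) (fun ω => ⟪X l ω, b i⟫ * ⟪X l ω, b j⟫) ℙ :=
    fun i j k l hkl => (hindep.indepFun hkl).comp (hgmeas i j) (hgmeas i j)
  refine ⟨M ^ 4, ?_⟩
  intro n hn
  have hn' : (n : ℝ) ≠ 0 := Nat.cast_ne_zero.mpr hn.ne'
  have hn0 : (0 : ℝ) ≤ M ^ 4 / n := by positivity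
  -- the key pointwise identity
  have hkey : ∀ (i j : ℕ) (ω : Ω),
      ⟪(((n : ℝ)⁻¹ • ∑ k ∈ Finset.range n, (innerSL ℝ (X k ω)).smulRight (X k ω))
          - ∫ ω', (innerSL ℝ (X 0 ω')).smulRight (X 0 ω') ∂(ℙ : Measure Ω)) (b i), b j⟫
        = (n : ℝ)⁻¹ * ∑ k ∈ Finset.range n, (⟪X k ω, b i⟫ * ⟪X k ω, b j⟫
            - ∫ ω', ⟪X 0 ω', b i⟫ * ⟪X 0 ω', b j⟫ ∂(ℙ : Measure Ω)) := by
    intro i j ω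
    rw [ContinuousLinearMap.sub_apply, inner_sub_left, hΓij i j,
      ContinuousLinearMap.smul_apply, real_inner_smul_left,
      ContinuousLinearMap.sum_apply, sum_inner]
    simp_rw [ContinuousLinearMap.smulRight_apply, innerSL_apply_apply, real_inner_smul_left]
    rw [Finset.sum_sub_distrib, Finset.sum_const, Finset.card_range, mul_sub, nsmul_eq_mul,
      ← mul_assoc, inv_mul_cancel₀ hn', one_mul]
  -- the scalar second moment bound for each pair of coordinates
  have hq : ∀ i j : ℕ,
      ∫ ω, ((n : ℝ)⁻¹ * ∑ k ∈ Finset.range n, (⟪X k ω, b i⟫ * ⟪X k ω, b j⟫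
          - ∫ ω', ⟪X 0 ω', b i⟫ * ⟪X 0 ω', b j⟫ ∂(ℙ : Measure Ω))) ^ 2 ∂(ℙ : Measure Ω)
        ≤ (∫ ω, (⟪X 0 ω, b i⟫ * ⟪X 0 ω, b j⟫) ^ 2 ∂(ℙ : Measure Ω)) / n := by
    intro i j
    exact my_scalar_var_bound (fun k ω => ⟪X k ω, b i⟫ * ⟪X k ω, b j⟫)
      (hVmeas i j) (hVid i j) (hVind i j) (M ^ 2) (hVbd i j) n hn
  -- measurability of the averages
  have hsmeas : ∀ i j : ℕ, Measurable (fun ω => (n : ℝ)⁻¹ * ∑ k ∈ Finset.range n, (⟪X k ω, b i⟫ * ⟪X k ω, b j⟫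
          - ∫ ω', ⟪X 0 ω', b i⟫ * ⟪X 0 ω', b j⟫ ∂(ℙ : Measure Ω))) := by
    intro i j
    exact measurable_const.mul
      (Finset.measurable_sum _ fun k _ => (hVmeas i j k).sub measurable_const)
  -- bound on the means
  have hμbd : ∀ i j : ℕ, |∫ ω', ⟪X 0 ω', b i⟫ * ⟪X 0 ω', b j⟫ ∂(ℙ : Measure Ω)| ≤ M ^ 2 := by
    intro i j
    rw [← Real.norm_eq_abs]
    calc ‖∫ ω', ⟪X 0 ω', b i⟫ * ⟪X 0 ω', b j⟫ ∂(ℙ : Measure Ω)‖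
        ≤ M ^ 2 * (ℙ Set.univ).toReal := norm_integral_le_of_norm_le_const
          ((hVbd i j 0).mono fun ω h => by rw [Real.norm_eq_abs]; exact h)
      _ = M ^ 2 := by simp
  -- a.e. bound on the averages
  have hsbd : ∀ i j : ℕ, ∀ᵐ ω ∂(ℙ : Measure Ω), |(n : ℝ)⁻¹ * ∑ k ∈ Finset.range n, (⟪X k ω, b i⟫ * ⟪X k ω, b j⟫
          - ∫ ω', ⟪X 0 ω', b i⟫ * ⟪X 0 ω', b j⟫ ∂(ℙ : Measure Ω))| ≤ 2 * M ^ 2 := by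
    intro i j
    have hall := ae_all_iff.2 (hVbd i j)
    refine hall.mono fun ω h => ?_
    have h1 : |∑ k ∈ Finset.range n, (⟪X k ω, b i⟫ * ⟪X k ω, b j⟫
        - ∫ ω', ⟪X 0 ω', b i⟫ * ⟪X 0 ω', b j⟫ ∂(ℙ : Measure Ω))|
        ≤ ∑ k ∈ Finset.range n, (2 * M ^ 2) := by
      refine (Finset.abs_sum_le_sum_abs _ _).trans (Finset.sum_le_sum fun k _ => ?_)
      calc |⟪X k ω, b i⟫ * ⟪X k ω, b j⟫ - ∫ ω', ⟪X 0 ω', b i⟫ * ⟪X 0 ω', b j⟫ ∂(ℙ : Measure Ω)|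
          ≤ |⟪X k ω, b i⟫ * ⟪X k ω, b j⟫|
            + |∫ ω', ⟪X 0 ω', b i⟫ * ⟪X 0 ω', b j⟫ ∂(ℙ : Measure Ω)| := abs_sub _ _
        _ ≤ M ^ 2 + M ^ 2 := add_le_add (h k) (hμbd i j)
        _ = 2 * M ^ 2 := by ring
    rw [abs_mul, abs_inv, Nat.abs_cast]
    calc (n : ℝ)⁻¹ * |∑ k ∈ Finset.range n, (⟪X k ω, b i⟫ * ⟪X k ω, b j⟫
            - ∫ ω', ⟪X 0 ω', b i⟫ * ⟪X 0 ω', b j⟫ ∂(ℙ : Measure Ω))|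
        ≤ (n : ℝ)⁻¹ * (n * (2 * M ^ 2)) := by
          refine mul_le_mul_of_nonneg_left ?_ (by positivity)
          simpa [Finset.sum_const, Finset.card_range] using h1
      _ = 2 * M ^ 2 := by field_simp
  -- integrability of the squared averages
  have hqint : ∀ i j : ℕ, Integrable (fun ω => ((n : ℝ)⁻¹ * ∑ k ∈ Finset.range n, (⟪X k ω, b i⟫ * ⟪X k ω, b j⟫
          - ∫ ω', ⟪X 0 ω', b i⟫ * ⟪X 0 ω', b j⟫ ∂(ℙ : Measure Ω))) ^ 2) (ℙ : Measure Ω) := by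
    intro i j
    refine my_integrable_of_bound ((hsmeas i j).pow_const 2).aestronglyMeasurable
      ((2 * M ^ 2) ^ 2) ((hsbd i j).mono fun ω h => ?_)
    rw [abs_pow]
    exact pow_le_pow_left₀ (abs_nonneg _) h 2
  -- integrability of squared products of coordinates
  have hZint : ∀ i j : ℕ,
      Integrable (fun ω => (⟪X 0 ω, b i⟫ * ⟪X 0 ω, b j⟫) ^ 2) (ℙ : Measure Ω) := by
    intro i j
    refine my_integrable_of_bound ((hVmeas i j 0).pow_const 2).aestronglyMeasurable
      ((M ^ 2) ^ 2) ((hVbd i j 0).mono fun ω h => ?_)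
    rw [abs_pow]
    exact pow_le_pow_left₀ (abs_nonneg _) h 2
  have he_nn : ∀ i j : ℕ, 0 ≤ ∫ ω, (⟪X 0 ω, b i⟫ * ⟪X 0 ω, b j⟫) ^ 2 ∂(ℙ : Measure Ω) :=
    fun i j => integral_nonneg fun ω => sq_nonneg _
  -- pointwise Parseval bound
  have hpt : ∀ x : H, ‖x‖ ≤ M →
      ∑' i, ∑' j, ENNReal.ofReal ((⟪x, b i⟫ * ⟪x, b j⟫) ^ 2) ≤ ENNReal.ofReal (M ^ 4) := by
    intro x hx
    have hsq : ∑' j, ENNReal.ofReal (⟪x, b j⟫ ^ 2) = ENNReal.ofReal (‖x‖ ^ 2) := by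
      rw [← (hv x).tsum_eq]
      exact (ENNReal.ofReal_tsum_of_nonneg (fun j => sq_nonneg _) (hv x).summable).symm
    calc ∑' i, ∑' j, ENNReal.ofReal ((⟪x, b i⟫ * ⟪x, b j⟫) ^ 2)
        = ∑' i, ∑' j, ENNReal.ofReal (⟪x, b i⟫ ^ 2) * ENNReal.ofReal (⟪x, b j⟫ ^ 2) := by
          simp_rw [mul_pow, ENNReal.ofReal_mul (sq_nonneg _)]
      _ = ∑' i, ENNReal.ofReal (⟪x, b i⟫ ^ 2) * ENNReal.ofReal (‖x‖ ^ 2) := by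
          simp_rw [ENNReal.tsum_mul_left, hsq]
      _ = ENNReal.ofReal (‖x‖ ^ 2) * ENNReal.ofReal (‖x‖ ^ 2) := by
          rw [ENNReal.tsum_mul_right, hsq]
      _ = ENNReal.ofReal (‖x‖ ^ 2 * ‖x‖ ^ 2) := (ENNReal.ofReal_mul (sq_nonneg _)).symm
      _ ≤ ENNReal.ofReal (M ^ 4) := by
          apply ENNReal.ofReal_le_ofReal
          have h4 : ‖x‖ ^ 2 * ‖x‖ ^ 2 = ‖x‖ ^ 4 := by ring
          rw [h4]
          exact pow_le_pow_left₀ (norm_nonneg _) hx 4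
  -- the double sum of second moments is bounded by M⁴
  have hSS : ∑' i, ∑' j, ENNReal.ofReal
      (∫ ω, (⟪X 0 ω, b i⟫ * ⟪X 0 ω, b j⟫) ^ 2 ∂(ℙ : Measure Ω)) ≤ ENNReal.ofReal (M ^ 4) := by
    have h1 : ∀ i j : ℕ, ENNReal.ofReal
        (∫ ω, (⟪X 0 ω, b i⟫ * ⟪X 0 ω, b j⟫) ^ 2 ∂(ℙ : Measure Ω))
        = ∫⁻ ω, ENNReal.ofReal ((⟪X 0 ω, b i⟫ * ⟪X 0 ω, b j⟫) ^ 2) ∂(ℙ : Measure Ω) := fun i j =>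
      ofReal_integral_eq_lintegral_ofReal (hZint i j) (ae_of_all _ fun ω => sq_nonneg _)
    simp_rw [h1]
    have h2 : ∀ i : ℕ, ∑' j, ∫⁻ ω, ENNReal.ofReal ((⟪X 0 ω, b i⟫ * ⟪X 0 ω, b j⟫) ^ 2)
          ∂(ℙ : Measure Ω)
        = ∫⁻ ω, ∑' j, ENNReal.ofReal ((⟪X 0 ω, b i⟫ * ⟪X 0 ω, b j⟫) ^ 2) ∂(ℙ : Measure Ω) :=
      fun i => (lintegral_tsum fun j =>
        ((hVmeas i j 0).pow_const 2).ennreal_ofReal.aemeasurable).symm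
    simp_rw [h2]
    rw [← lintegral_tsum fun i => (Measurable.ennreal_tsum fun j =>
      ((hVmeas i j 0).pow_const 2).ennreal_ofReal).aemeasurable]
    calc ∫⁻ ω, ∑' i, ∑' j, ENNReal.ofReal ((⟪X 0 ω, b i⟫ * ⟪X 0 ω, b j⟫) ^ 2) ∂(ℙ : Measure Ω)
        ≤ ∫⁻ _, ENNReal.ofReal (M ^ 4) ∂(ℙ : Measure Ω) :=
          lintegral_mono_ae (hM.mono fun ω h => hpt (X 0 ω) h)
      _ = ENNReal.ofReal (M ^ 4) := by simp
  -- pointwise domination of the HS norm by the double series of coordinates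
  have hFle : ∀ ω : Ω, ENNReal.ofReal (∑' i, ‖(((n : ℝ)⁻¹ •
        ∑ k ∈ Finset.range n, (innerSL ℝ (X k ω)).smulRight (X k ω))
        - ∫ ω', (innerSL ℝ (X 0 ω')).smulRight (X 0 ω') ∂(ℙ : Measure Ω)) (b i)‖ ^ 2)
      ≤ ∑' i, ∑' j, ENNReal.ofReal (((n : ℝ)⁻¹ * ∑ k ∈ Finset.range n, (⟪X k ω, b i⟫ * ⟪X k ω, b j⟫
          - ∫ ω', ⟪X 0 ω', b i⟫ * ⟪X 0 ω', b j⟫ ∂(ℙ : Measure Ω))) ^ 2) := by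
    intro ω
    refine le_trans (my_ofReal_tsum_le fun i => by positivity)
      (ENNReal.tsum_le_tsum fun i => ?_)
    have hvv := hv ((((n : ℝ)⁻¹ •
        ∑ k ∈ Finset.range n, (innerSL ℝ (X k ω)).smulRight (X k ω))
        - ∫ ω', (innerSL ℝ (X 0 ω')).smulRight (X 0 ω') ∂(ℙ : Measure Ω)) (b i))
    rw [← hvv.tsum_eq, ENNReal.ofReal_tsum_of_nonneg (fun j => sq_nonneg _) hvv.summable]
    exact le_of_eq (tsum_congr fun j => by rw [hkey i j ω])
  -- conclusion
  by_cases hFi : Integrable (fun ω => ∑' i, ‖(((n : ℝ)⁻¹ •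
      ∑ k ∈ Finset.range n, (innerSL ℝ (X k ω)).smulRight (X k ω))
      - ∫ ω', (innerSL ℝ (X 0 ω')).smulRight (X 0 ω') ∂(ℙ : Measure Ω)) (b i)‖ ^ 2)
      (ℙ : Measure Ω)
  swap
  · rw [integral_undef hFi]
    exact hn0
  rw [integral_eq_lintegral_of_nonneg_ae
    (ae_of_all _ fun ω => tsum_nonneg fun i => by positivity) hFi.1]
  refine ENNReal.toReal_le_of_le_ofReal hn0 ?_
  calc ∫⁻ ω, ENNReal.ofReal (∑' i, ‖(((n : ℝ)⁻¹ •
        ∑ k ∈ Finset.range n, (innerSL ℝ (X k ω)).smulRight (X k ω))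
        - ∫ ω', (innerSL ℝ (X 0 ω')).smulRight (X 0 ω') ∂(ℙ : Measure Ω)) (b i)‖ ^ 2)
        ∂(ℙ : Measure Ω)
      ≤ ∫⁻ ω, ∑' i, ∑' j, ENNReal.ofReal (((n : ℝ)⁻¹ * ∑ k ∈ Finset.range n, (⟪X k ω, b i⟫ * ⟪X k ω, b j⟫
          - ∫ ω', ⟪X 0 ω', b i⟫ * ⟪X 0 ω', b j⟫ ∂(ℙ : Measure Ω))) ^ 2) ∂(ℙ : Measure Ω) :=
        lintegral_mono fun ω => hFle ω
    _ = ∑' i, ∑' j, ∫⁻ ω, ENNReal.ofReal (((n : ℝ)⁻¹ * ∑ k ∈ Finset.range n, (⟪X k ω, b i⟫ * ⟪X k ω, b j⟫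
          - ∫ ω', ⟪X 0 ω', b i⟫ * ⟪X 0 ω', b j⟫ ∂(ℙ : Measure Ω))) ^ 2) ∂(ℙ : Measure Ω) := by
        rw [lintegral_tsum fun i => (Measurable.ennreal_tsum fun j =>
          ((hsmeas i j).pow_const 2).ennreal_ofReal).aemeasurable]
        exact tsum_congr fun i => lintegral_tsum fun j =>
          ((hsmeas i j).pow_const 2).ennreal_ofReal.aemeasurable
    _ = ∑' i, ∑' j, ENNReal.ofReal (∫ ω, ((n : ℝ)⁻¹ * ∑ k ∈ Finset.range n, (⟪X k ω, b i⟫ * ⟪X k ω, b j⟫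
          - ∫ ω', ⟪X 0 ω', b i⟫ * ⟪X 0 ω', b j⟫ ∂(ℙ : Measure Ω))) ^ 2 ∂(ℙ : Measure Ω)) := by
        refine tsum_congr fun i => tsum_congr fun j => ?_
        exact (ofReal_integral_eq_lintegral_ofReal (hqint i j)
          (ae_of_all _ fun ω => sq_nonneg _)).symm
    _ ≤ ∑' i, ∑' j, ENNReal.ofReal
        ((∫ ω, (⟪X 0 ω, b i⟫ * ⟪X 0 ω, b j⟫) ^ 2 ∂(ℙ : Measure Ω)) / n) :=
        ENNReal.tsum_le_tsum fun i => ENNReal.tsum_le_tsum fun j =>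
          ENNReal.ofReal_le_ofReal (hq i j)
    _ = (∑' i, ∑' j, ENNReal.ofReal
        (∫ ω, (⟪X 0 ω, b i⟫ * ⟪X 0 ω, b j⟫) ^ 2 ∂(ℙ : Measure Ω))) * ENNReal.ofReal ((n : ℝ)⁻¹) := by
        simp_rw [div_eq_mul_inv, ENNReal.ofReal_mul (he_nn _ _), ENNReal.tsum_mul_right]
    _ ≤ ENNReal.ofReal (M ^ 4) * ENNReal.ofReal ((n : ℝ)⁻¹) := mul_le_mul_left hSS _
    _ = ENNReal.ofReal (M ^ 4 / n) := by
        rw [← ENNReal.ofReal_mul (by positivity), div_eq_mul_inv]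
end
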